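/- arXiv:0908.2098 — 2 statements merged into one kernel-verified Lean document; each statement's English description precedes it below -/
import Mathlib

section
/- In the setting of the single-run MSE bound, if additionally π₀ = δ_x P^t (deterministic start at x followed by burn-in t), then MSE(Î_{t,n}) ≤ (‖|f_c|^p‖_V^{2/p}/n)·(1 + 2M_rγ_r/(1−γ_r))·(πV + M²γ^t V(x)/(n(1−γ))), where Î_{t,n} = (1/n)∑_{i=t}^{t+n−1} f(X_i). -/
open MeasureTheory ProbabilityTheory

/-- One step of the Markov chain on the level of distributions: μ ↦ μP. -/
noncomputable def kstep {X : Type*} [MeasurableSpace X] (P : Kernel X X)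
    (μ : Measure X) : Measure X := μ.bind (fun x => P x)

/-- n-step evolution: μ ↦ μPⁿ. -/
noncomputable def evolve {X : Type*} [MeasurableSpace X] (P : Kernel X X)
    (μ : Measure X) (n : ℕ) : Measure X := (kstep P)^[n] μ

/-!
Write `φ = f - πf` and `Y i = φ (X (t + i))`. Expanding the square, the MSE is `n⁻²` times the
sum of the covariances `E[Y i Y j]`. For `i ≤ j` the Markov property turns `E[Y i Y j]` into
`E[φ (X (t+i)) · (P^(j-i) φ) (X (t+i))]`; since `πφ = 0`, `V^{1/r}`-ergodicity gives
`|P^k φ| ≤ ‖|φ|^p‖_V^{1/p} M_r γ_r^k V^{1/r}`, and since `1/p + 1/r ≤ 1` and `V ≥ 1` the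
covariance is at most `‖|φ|^p‖_V^{2/p} M_r γ_r^(j-i) E[V(X (t+i))]`. Summing the geometric decay
in `j - i` gives the factor `1 + 2 M_r γ_r / (1 - γ_r)`. Finally
`E[V(X (t+i))] ≤ πV + M² γ^(t+i) V(x₀)`: the law `δ_{x₀} P^t` is within `M γ^t V(x₀)` of `π` in
`V`-norm, and `P^i` contracts that distance by `M γ^i`.
-/

namespace ProbabilityTheory.Kernel

variable {X : Type*} [MeasurableSpace X]

instance isMarkovKernel_pow (P : Kernel X X) [IsMarkovKernel P] (k : ℕ) :
    IsMarkovKernel (P ^ k) := by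
  induction k with
  | zero => exact inferInstanceAs (IsMarkovKernel Kernel.id)
  | succ k _ => rw [pow_succ']; exact IsMarkovKernel.comp P (P ^ k)

theorem pow_zero_apply (P : Kernel X X) (x : X) : (P ^ 0) x = Measure.dirac x := by
  rw [pow_zero]
  exact Kernel.id_apply x

theorem pow_add_apply_eq_comp (P : Kernel X X) (m k : ℕ) (x : X) :
    (P ^ (m + k)) x = (P ^ k) ∘ₘ (P ^ m) x := by
  rw [add_comm, pow_add]
  rfl

theorem pow_comp_eq_self {P : Kernel X X} {π : Measure X} (h : P ∘ₘ π = π) (k : ℕ) :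
    (P ^ k) ∘ₘ π = π := by
  induction k with
  | zero => exact Measure.id_comp
  | succ k ih =>
    calc (P ^ (k + 1)) ∘ₘ π = P ∘ₘ ((P ^ k) ∘ₘ π) := by
          rw [pow_succ']; exact Measure.comp_assoc.symm
      _ = π := by rw [ih, h]

end ProbabilityTheory.Kernel

namespace MeasureTheory.Measure

variable {X Y : Type*} [MeasurableSpace X] [MeasurableSpace Y]

theorem integral_comp {μ : Measure X} {κ : Kernel X Y} {g : Y → ℝ}
    (hg : Integrable g (κ ∘ₘ μ)) : ∫ y, g y ∂(κ ∘ₘ μ) = ∫ x, ∫ y, g y ∂κ x ∂μ := by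
  rw [comp_eq_comp_const_apply] at hg ⊢
  rw [Kernel.integral_comp hg, Kernel.const_apply]

theorem integrable_integral_comp {μ : Measure X} {κ : Kernel X Y} {g : Y → ℝ}
    (hg : Integrable g (κ ∘ₘ μ)) : Integrable (fun x => ∫ y, g y ∂κ x) μ := by
  rw [comp_eq_comp_const_apply] at hg
  simpa using hg.integral_comp

theorem bind_map_prodMk_eq_compProd (μ : Measure X) [SFinite μ] (κ : Kernel X Y)
    [IsSFiniteKernel κ] : μ.bind (fun x => (κ x).map (fun y => (x, y))) = μ ⊗ₘ κ := by
  rw [compProd_eq_comp_prod]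
  congr 1
  ext1 x
  rw [Kernel.prod_apply, Kernel.id_apply, dirac_prod]

end MeasureTheory.Measure

section Evolve

variable {X : Type*} [MeasurableSpace X]

theorem evolve_eq_comp (P : Kernel X X) (μ : Measure X) (k : ℕ) :
    evolve P μ k = (P ^ k) ∘ₘ μ := by
  induction k with
  | zero => exact Measure.id_comp.symm
  | succ k ih =>
    rw [evolve, Function.iterate_succ_apply', ← evolve, ih, pow_succ']
    exact Measure.comp_assoc

theorem evolve_dirac (P : Kernel X X) (x : X) (k : ℕ) :
    evolve P (Measure.dirac x) k = (P ^ k) x := by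
  rw [evolve_eq_comp, Measure.dirac_bind (Kernel.measurable _)]

end Evolve

section RealInequalities

theorem one_div_mul_sum_range_sub {n : ℕ} (hn : n ≠ 0) (a : ℕ → ℝ) (c : ℝ) :
    1 / (n : ℝ) * ∑ i ∈ Finset.range n, a i - c =
      1 / (n : ℝ) * ∑ i ∈ Finset.range n, (a i - c) := by
  rw [Finset.sum_sub_distrib, Finset.sum_const, Finset.card_range, nsmul_eq_mul]
  field_simp

theorem abs_le_rpow_mul_rpow_of_abs_rpow_le {a F v p : ℝ} (hF : 0 ≤ F) (hv : 0 ≤ v)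
    (hp : 0 < p) (h : |a| ^ p ≤ F * v) : |a| ≤ F ^ (1 / p) * v ^ (1 / p) := by
  rw [← Real.mul_rpow hF hv, one_div,
    Real.le_rpow_inv_iff_of_pos (abs_nonneg a) (mul_nonneg hF hv) hp]
  exact h

theorem abs_mul_le_of_abs_le_rpow {a b q C v s u : ℝ} (hv : 1 ≤ v) (hsu : s + u ≤ 1)
    (hq : 0 ≤ q) (hC : 0 ≤ C) (ha : |a| ≤ q * v ^ s) (hb : |b| ≤ q * C * v ^ u) :
    |a * b| ≤ q ^ 2 * C * v := by
  calc |a * b| = |a| * |b| := abs_mul a b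
    _ ≤ (q * v ^ s) * (q * C * v ^ u) := by gcongr
    _ = q ^ 2 * C * v ^ (s + u) := by rw [Real.rpow_add (by linarith)]; ring
    _ ≤ q ^ 2 * C * v := by gcongr; exact Real.rpow_le_self_of_one_le hv hsu

theorem rpow_one_div_sq {F : ℝ} (hF : 0 ≤ F) (p : ℝ) : (F ^ (1 / p)) ^ 2 = F ^ (2 / p) := by
  rw [← Real.rpow_mul_natCast hF]
  ring_nf

theorem sq_le_of_abs_rpow_le {a F v p : ℝ} (hp : 2 ≤ p) (hF : 0 ≤ F) (hv : 1 ≤ v)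
    (h : |a| ^ p ≤ F * v) : a ^ 2 ≤ F ^ (2 / p) * v := by
  have ha := abs_le_rpow_mul_rpow_of_abs_rpow_le hF (zero_le_one.trans hv) (by linarith) h
  have hsu : 1 / p + 1 / p ≤ 1 := by
    rw [← add_div, div_le_one (by linarith)]
    linarith
  have := abs_mul_le_of_abs_le_rpow hv hsu (by positivity) zero_le_one ha (by rwa [mul_one])
  rwa [abs_mul_self, ← sq, rpow_one_div_sq hF, mul_one] at this

theorem sum_Ico_pow_sub_le {ρ : ℝ} (hρ0 : 0 ≤ ρ) (hρ1 : ρ < 1) (i n : ℕ) :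
    ∑ j ∈ Finset.Ico (i + 1) n, ρ ^ (j - i) ≤ ρ / (1 - ρ) := by
  calc ∑ j ∈ Finset.Ico (i + 1) n, ρ ^ (j - i)
      ≤ ∑ j ∈ Finset.Ico (1 + i) (n + i), ρ ^ (j - i) := by
        refine Finset.sum_le_sum_of_subset_of_nonneg ?_ fun _ _ _ => pow_nonneg hρ0 _
        intro j
        simp only [Finset.mem_Ico]
        omega
    _ = ∑ k ∈ Finset.Ico 1 n, ρ ^ k := Finset.sum_Ico_add_right_sub_eq _ _ _
    _ ≤ ρ / (1 - ρ) := by simpa using geom_sum_Ico_le_of_lt_one (m := 1) (n := n) hρ0 hρ1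

theorem sum_range_mul_add_pow_le {F A D E γ : ℝ} (hF : 0 ≤ F) (hDE : 0 ≤ D * E) (hγ0 : 0 ≤ γ)
    (hγ1 : γ < 1) (t n : ℕ) :
    ∑ i ∈ Finset.range n, F * (A + D * γ ^ (t + i) * E) ≤
      F * (n * A + D * γ ^ t * E / (1 - γ)) := by
  have hgeom : ∑ i ∈ Finset.range n, γ ^ (t + i) ≤ γ ^ t / (1 - γ) := by
    simpa [Finset.sum_Ico_eq_sum_range] using
      geom_sum_Ico_le_of_lt_one (m := t) (n := t + n) hγ0 hγ1
  simp_rw [← Finset.mul_sum, Finset.sum_add_distrib, Finset.sum_const, Finset.card_range,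
    nsmul_eq_mul, show ∀ i, D * γ ^ (t + i) * E = D * E * γ ^ (t + i) from fun i => by ring,
    ← Finset.mul_sum]
  gcongr
  calc D * E * ∑ i ∈ Finset.range n, γ ^ (t + i) ≤ D * E * (γ ^ t / (1 - γ)) := by gcongr
    _ = D * γ ^ t * E / (1 - γ) := by ring

theorem sum_range_sum_range_le_of_geometric_decay {n : ℕ} {B : ℕ → ℝ} (hB : ∀ i, 0 ≤ B i)
    {c ρ : ℝ} (hc : 0 ≤ c) (hρ0 : 0 ≤ ρ) (hρ1 : ρ < 1) {C : ℕ → ℕ → ℝ}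
    (hsymm : ∀ i j, C i j = C j i) (hdiag : ∀ i, C i i ≤ B i)
    (hoff : ∀ i j, i < j → C i j ≤ c * ρ ^ (j - i) * B i) :
    ∑ i ∈ Finset.range n, ∑ j ∈ Finset.range n, C i j ≤
      (1 + 2 * c * ρ / (1 - ρ)) * ∑ i ∈ Finset.range n, B i := by
  set U := ∑ i ∈ Finset.range n, ∑ j ∈ Finset.Ico (i + 1) n, C i j
  have hrow : ∀ i ∈ Finset.range n, ∑ j ∈ Finset.range n, C i j =
      ∑ j ∈ Finset.range i, C i j + C i i + ∑ j ∈ Finset.Ico (i + 1) n, C i j := by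
    intro i hi
    rw [Finset.mem_range] at hi
    rw [Finset.range_eq_Ico, ← Finset.sum_Ico_consecutive _ (Nat.zero_le i) hi.le,
      Finset.sum_eq_sum_Ico_succ_bot hi, ← Finset.range_eq_Ico, add_assoc]
  have hlower : ∑ i ∈ Finset.range n, ∑ j ∈ Finset.range i, C i j = U := by
    simp only [U, Finset.range_eq_Ico, Finset.sum_Ico_Ico_comm', hsymm]
  have hU : U ≤ c * (ρ / (1 - ρ)) * ∑ i ∈ Finset.range n, B i := by
    rw [Finset.mul_sum]
    refine Finset.sum_le_sum fun i _ => ?_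
    calc ∑ j ∈ Finset.Ico (i + 1) n, C i j
        ≤ ∑ j ∈ Finset.Ico (i + 1) n, c * ρ ^ (j - i) * B i :=
          Finset.sum_le_sum fun j hj => hoff i j (Finset.mem_Ico.1 hj).1
      _ = c * (∑ j ∈ Finset.Ico (i + 1) n, ρ ^ (j - i)) * B i := by
          rw [Finset.mul_sum, Finset.sum_mul]
      _ ≤ c * (ρ / (1 - ρ)) * B i := by
          gcongr
          · exact hB i
          · exact sum_Ico_pow_sub_le hρ0 hρ1 i n
  have hD : ∑ i ∈ Finset.range n, C i i ≤ ∑ i ∈ Finset.range n, B i :=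
    Finset.sum_le_sum fun i _ => hdiag i
  rw [Finset.sum_congr rfl hrow, Finset.sum_add_distrib, Finset.sum_add_distrib, hlower,
    show 2 * c * ρ / (1 - ρ) = 2 * (c * (ρ / (1 - ρ))) by ring]
  linarith

end RealInequalities

section WeightedDistance

variable {X : Type*} [MeasurableSpace X]

theorem integrable_min_natCast {ν : Measure X} [IsFiniteMeasure ν] {V : X → ℝ}
    (hVm : Measurable V) (hV0 : ∀ y, 0 ≤ V y) (K : ℕ) :
    Integrable (fun y => min (V y) K) ν :=
  .of_bound (hVm.min measurable_const).aestronglyMeasurable K <| ae_of_all _ fun y => by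
    rw [Real.norm_of_nonneg (le_min (hV0 y) K.cast_nonneg)]
    exact min_le_right _ _

open Filter Topology in
theorem integrable_and_integral_le_of_integral_min_le {ν : Measure X} [IsFiniteMeasure ν]
    {V : X → ℝ} (hVm : Measurable V) (hV0 : ∀ y, 0 ≤ V y) {B : ℝ}
    (hB : ∀ K : ℕ, ∫ y, min (V y) K ∂ν ≤ B) : Integrable V ν ∧ ∫ y, V y ∂ν ≤ B := by
  have hV0' : 0 ≤ᵐ[ν] V := ae_of_all _ hV0
  have hB0 : 0 ≤ B := by simpa [min_eq_right (hV0 _)] using hB 0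
  have hlim : ∀ y, Tendsto (fun K : ℕ => ENNReal.ofReal (min (V y) K)) atTop
      (𝓝 (ENNReal.ofReal (V y))) := fun y =>
    tendsto_atTop_of_eventually_const (i₀ := ⌈V y⌉₊) fun K hK => by
      rw [min_eq_left ((Nat.le_ceil _).trans (by exact_mod_cast hK))]
  have hmono : ∀ y, Monotone fun K : ℕ => ENNReal.ofReal (min (V y) K) := fun y a b hab =>
    ENNReal.ofReal_le_ofReal (min_le_min_left _ (by exact_mod_cast hab))
  have hlin : ∫⁻ y, ENNReal.ofReal (V y) ∂ν ≤ ENNReal.ofReal B := by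
    refine le_of_tendsto' (lintegral_tendsto_of_tendsto_of_monotone
      (fun K => (hVm.min measurable_const).ennreal_ofReal.aemeasurable)
      (ae_of_all _ hmono) (ae_of_all _ hlim)) fun K => ?_
    rw [← ofReal_integral_eq_lintegral_ofReal (integrable_min_natCast hVm hV0 K)
      (ae_of_all _ fun y => le_min (hV0 y) K.cast_nonneg)]
    exact ENNReal.ofReal_le_ofReal (hB K)
  refine ⟨⟨hVm.aestronglyMeasurable, (hasFiniteIntegral_iff_ofReal hV0').2
    (hlin.trans_lt ENNReal.ofReal_lt_top)⟩, ?_⟩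
  rw [integral_eq_lintegral_of_nonneg_ae hV0' hVm.aestronglyMeasurable]
  exact ENNReal.toReal_le_of_le_ofReal hB0 hlin

/-- `‖μ - ν‖_V ≤ B`. -/
def WeightedDistLE (V : X → ℝ) (μ ν : Measure X) (B : ℝ) : Prop :=
  ∀ g : X → ℝ, Measurable g → (∀ y, |g y| ≤ V y) → |∫ y, g y ∂μ - ∫ y, g y ∂ν| ≤ B

namespace WeightedDistLE

variable {V : X → ℝ} {μ ν : Measure X} {B : ℝ}

theorem abs_integral_sub_le_mul (h : WeightedDistLE V μ ν B) {c : ℝ} (hc : 0 ≤ c)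
    {g : X → ℝ} (hg : Measurable g) (hgV : ∀ y, |g y| ≤ c * V y) :
    |∫ y, g y ∂μ - ∫ y, g y ∂ν| ≤ c * B := by
  rcases hc.eq_or_lt with rfl | hc
  · have : g = 0 := funext fun y => abs_nonpos_iff.1 (by simpa using hgV y)
    simp [this]
  · have := h (fun y => c⁻¹ * g y) (hg.const_mul _) fun y => by
      rw [abs_mul, abs_of_pos (inv_pos.2 hc), inv_mul_le_iff₀ hc]
      exact hgV y
    rwa [integral_const_mul, integral_const_mul, ← mul_sub, abs_mul, abs_of_pos (inv_pos.2 hc),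
      inv_mul_le_iff₀ hc] at this

theorem integrable_and_integral_le (h : WeightedDistLE V μ ν B) [IsFiniteMeasure μ]
    (hVm : Measurable V) (hV0 : ∀ y, 0 ≤ V y) (hVν : Integrable V ν) :
    Integrable V μ ∧ ∫ y, V y ∂μ ≤ ∫ y, V y ∂ν + B := by
  refine integrable_and_integral_le_of_integral_min_le hVm hV0 fun K => ?_
  have hmin := h _ (hVm.min measurable_const) fun y => by
    rw [abs_of_nonneg (le_min (hV0 y) K.cast_nonneg)]
    exact min_le_left _ _
  have hνK : ∫ y, min (V y) K ∂ν ≤ ∫ y, V y ∂ν :=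
    integral_mono_of_nonneg (ae_of_all _ fun y => le_min (hV0 y) K.cast_nonneg) hVν
      (ae_of_all _ fun y => min_le_left _ _)
  linarith [(abs_le.1 hmin).2]

theorem comp [IsProbabilityMeasure μ] [IsProbabilityMeasure ν] (h : WeightedDistLE V μ ν B)
    {κ : Kernel X X} [IsMarkovKernel κ] {c : ℝ} (hc : 0 ≤ c)
    (hκ : ∀ x, WeightedDistLE V (κ x) ν (c * V x)) (hκν : κ ∘ₘ ν = ν)
    (hVν : Integrable V ν) (hVμ : Integrable V (κ ∘ₘ μ)) :
    WeightedDistLE V (κ ∘ₘ μ) ν (c * B) := by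
  intro g hg hgV
  have hgi : ∀ {ρ : Measure X}, Integrable V ρ → Integrable g ρ := fun hV =>
    hV.mono' hg.aestronglyMeasurable (ae_of_all _ hgV)
  have hcomp : ∀ (ρ : Measure X) [IsProbabilityMeasure ρ], Integrable V (κ ∘ₘ ρ) →
      ∫ x, (∫ y, g y ∂κ x - ∫ y, g y ∂ν) ∂ρ = ∫ y, g y ∂(κ ∘ₘ ρ) - ∫ y, g y ∂ν :=
    fun ρ _ hV => by
      rw [integral_sub (Measure.integrable_integral_comp (hgi hV)) (integrable_const _),
        ← Measure.integral_comp (hgi hV), integral_const, probReal_univ, one_smul]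
  have key := h.abs_integral_sub_le_mul hc
    ((hg.stronglyMeasurable.integral_kernel (κ := κ)).measurable.sub_const (∫ y, g y ∂ν))
    fun x => hκ x g hg hgV
  rwa [hcomp μ hVμ, hcomp ν (by rwa [hκν]), hκν, sub_self, sub_zero] at key

end WeightedDistLE

theorem integrable_and_integral_pow_add_apply_le {P : Kernel X X} [IsMarkovKernel P]
    {π : Measure X} [IsProbabilityMeasure π] (hinv : P ∘ₘ π = π) {V : X → ℝ}
    (hVm : Measurable V) (hV0 : ∀ y, 0 ≤ V y) (hπV : Integrable V π) {M γ : ℝ} (hM : 0 ≤ M)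
    (hγ : 0 ≤ γ) (hErgV : ∀ x k, WeightedDistLE V ((P ^ k) x) π (M * γ ^ k * V x))
    (x : X) (t i : ℕ) :
    Integrable V ((P ^ (t + i)) x) ∧
      ∫ y, V y ∂(P ^ (t + i)) x ≤ ∫ y, V y ∂π + M ^ 2 * γ ^ (t + i) * V x := by
  have hint := ((hErgV x (t + i)).integrable_and_integral_le hVm hV0 hπV).1
  rw [Kernel.pow_add_apply_eq_comp] at hint ⊢
  have h := ((hErgV x t).comp (by positivity) (fun y => hErgV y i)
    (Kernel.pow_comp_eq_self hinv i) hπV hint).integrable_and_integral_le hVm hV0 hπV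
  refine ⟨h.1, h.2.trans_eq ?_⟩
  ring

theorem abs_mul_integral_pow_le {P : Kernel X X} {π : Measure X} {V φ : X → ℝ}
    {F p r Mr γr : ℝ} (hMr : 0 ≤ Mr) (hγr : 0 ≤ γr) (hp : 2 ≤ p) (hr₁ : p / (p - 1) ≤ r)
    (hr₂ : r ≤ p) (hErgVr : ∀ x k, WeightedDistLE (fun y => V y ^ (1 / r)) ((P ^ k) x) π
      (Mr * γr ^ k * V x ^ (1 / r)))
    (hF : 0 ≤ F) (hV1 : ∀ y, 1 ≤ V y) (hφm : Measurable φ) (hφ : ∀ y, |φ y| ^ p ≤ F * V y)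
    (hπφ : ∫ y, φ y ∂π = 0) (k : ℕ) (x : X) :
    |φ x * ∫ y, φ y ∂(P ^ k) x| ≤ F ^ (2 / p) * (Mr * γr ^ k) * V x := by
  have hp0 : 0 < p := by linarith
  have hr0 : 0 < r := (div_pos hp0 (by linarith)).trans_le hr₁
  have hφp : ∀ y, |φ y| ≤ F ^ (1 / p) * V y ^ (1 / p) := fun y =>
    abs_le_rpow_mul_rpow_of_abs_rpow_le hF (zero_le_one.trans (hV1 y)) hp0 (hφ y)
  have hφr : ∀ y, |φ y| ≤ F ^ (1 / p) * V y ^ (1 / r) := fun y =>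
    (hφp y).trans (by gcongr; exact hV1 y)
  have hPφ := (hErgVr x k).abs_integral_sub_le_mul (by positivity) hφm hφr
  rw [hπφ, sub_zero, ← mul_assoc] at hPφ
  rw [← rpow_one_div_sq hF]
  refine abs_mul_le_of_abs_le_rpow (hV1 x) ?_ (by positivity) (by positivity) (hφp x) hPφ
  rw [div_add_div _ _ hp0.ne' hr0.ne', div_le_one (by positivity)]
  rw [div_le_iff₀ (by linarith)] at hr₁
  linarith

end WeightedDistance

section Covariance

variable {X Ω : Type*} [MeasurableSpace X] [MeasurableSpace Ω] {Pr : Measure Ω}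

theorem integral_sq_sum_eq {ι : Type*} (s : Finset ι) {Y : ι → Ω → ℝ}
    (hY : ∀ i, MemLp (Y i) 2 Pr) :
    ∫ ω, (∑ i ∈ s, Y i ω) ^ 2 ∂Pr = ∑ i ∈ s, ∑ j ∈ s, ∫ ω, Y i ω * Y j ω ∂Pr := by
  have hYY : ∀ i j, Integrable (fun ω => Y i ω * Y j ω) Pr := fun i j =>
    (hY i).integrable_mul (hY j)
  simp_rw [sq, Finset.sum_mul_sum]
  rw [integral_finsetSum _ fun i _ => integrable_finsetSum _ fun j _ => hYY i j]
  exact Finset.sum_congr rfl fun i _ => integral_finsetSum _ fun j _ => hYY i j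

theorem integral_sq_average_le {Y : ℕ → Ω → ℝ} (hY : ∀ i, MemLp (Y i) 2 Pr) (n : ℕ)
    {B : ℕ → ℝ} (hB : ∀ i, 0 ≤ B i) {c ρ : ℝ} (hc : 0 ≤ c) (hρ0 : 0 ≤ ρ) (hρ1 : ρ < 1)
    (hdiag : ∀ i, ∫ ω, Y i ω * Y i ω ∂Pr ≤ B i)
    (hoff : ∀ i j, i < j → ∫ ω, Y i ω * Y j ω ∂Pr ≤ c * ρ ^ (j - i) * B i) :
    ∫ ω, (1 / (n : ℝ) * ∑ i ∈ Finset.range n, Y i ω) ^ 2 ∂Pr ≤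
      (1 / (n : ℝ)) ^ 2 * ((1 + 2 * c * ρ / (1 - ρ)) * ∑ i ∈ Finset.range n, B i) := by
  simp_rw [mul_pow]
  rw [integral_const_mul, integral_sq_sum_eq _ hY]
  gcongr
  exact sum_range_sum_range_le_of_geometric_decay hB hc hρ0 hρ1
    (fun i j => by simp_rw [mul_comm]) hdiag hoff

theorem memLp_two_comp_of_sq_le {Y : Ω → X} (hY : Measurable Y) {φ V : X → ℝ}
    (hφ : Measurable φ) (hV : Integrable V (Pr.map Y)) {A : ℝ} (h : ∀ x, φ x ^ 2 ≤ A * V x) :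
    MemLp (fun ω => φ (Y ω)) 2 Pr := by
  refine (memLp_map_measure_iff hφ.aestronglyMeasurable hY.aemeasurable).1 ?_
  rw [memLp_two_iff_integrable_sq hφ.aestronglyMeasurable]
  exact (hV.const_mul A).mono' (hφ.pow_const 2).aestronglyMeasurable
    (ae_of_all _ fun x => by simpa using h x)

theorem integral_mul_le_of_map_prodMk_eq_compProd [IsFiniteMeasure Pr] {κ : Kernel X X}
    [IsMarkovKernel κ] {Y Z : Ω → X} (hY : Measurable Y) (hZ : Measurable Z)
    (hYZ : Pr.map (fun ω => (Y ω, Z ω)) = Pr.map Y ⊗ₘ κ) {φ V : X → ℝ} (hφ : Measurable φ)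
    (hφYZ : Integrable (fun ω => φ (Y ω) * φ (Z ω)) Pr) (hV : Integrable V (Pr.map Y))
    {C : ℝ} (hbound : ∀ x, |φ x * ∫ y, φ y ∂κ x| ≤ C * V x) :
    ∫ ω, φ (Y ω) * φ (Z ω) ∂Pr ≤ C * ∫ x, V x ∂(Pr.map Y) := by
  have hF : Measurable fun z : X × X => φ z.1 * φ z.2 :=
    (hφ.comp measurable_fst).mul (hφ.comp measurable_snd)
  have hYZm : Measurable fun ω => (Y ω, Z ω) := hY.prodMk hZ
  have hFint : Integrable (fun z : X × X => φ z.1 * φ z.2) (Pr.map Y ⊗ₘ κ) := by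
    rw [← hYZ]
    exact (integrable_map_measure hF.aestronglyMeasurable hYZm.aemeasurable).2 hφYZ
  have hκφ : Measurable fun x => ∫ y, φ y ∂κ x :=
    (hφ.stronglyMeasurable.integral_kernel (κ := κ)).measurable
  calc ∫ ω, φ (Y ω) * φ (Z ω) ∂Pr
      = ∫ x, φ x * ∫ y, φ y ∂κ x ∂(Pr.map Y) := by
        rw [← integral_map hYZm.aemeasurable hF.aestronglyMeasurable, hYZ,
          Measure.integral_compProd hFint]
        simp_rw [integral_const_mul]
    _ ≤ ∫ x, C * V x ∂(Pr.map Y) :=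
        integral_mono ((hV.const_mul C).mono' (hφ.mul hκφ).aestronglyMeasurable
          (ae_of_all _ hbound)) (hV.const_mul C) fun x => (le_abs_self _).trans (hbound x)
    _ = C * ∫ x, V x ∂(Pr.map Y) := integral_const_mul _ _

theorem integral_sq_average_le_of_markov [IsProbabilityMeasure Pr] {P : Kernel X X}
    [IsMarkovKernel P] {Xc : ℕ → Ω → X} (hXm : ∀ i, Measurable (Xc i))
    (hjoint : ∀ i j, i ≤ j →
      Pr.map (fun ω => (Xc i ω, Xc j ω)) = Pr.map (Xc i) ⊗ₘ (P ^ (j - i)))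
    {φ V : X → ℝ} (hφ : Measurable φ) (hV0 : ∀ x, 0 ≤ V x)
    (hV : ∀ i, Integrable V (Pr.map (Xc i))) {A c ρ : ℝ} (hA : 0 ≤ A) (hc : 0 ≤ c)
    (hρ0 : 0 ≤ ρ) (hρ1 : ρ < 1) (hsq : ∀ x, φ x ^ 2 ≤ A * V x)
    (hdecay : ∀ k x, |φ x * ∫ y, φ y ∂(P ^ k) x| ≤ A * (c * ρ ^ k) * V x) (n : ℕ)
    {b : ℕ → ℝ} (hb : ∀ i, ∫ x, V x ∂(Pr.map (Xc i)) ≤ b i) :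
    ∫ ω, (1 / (n : ℝ) * ∑ i ∈ Finset.range n, φ (Xc i ω)) ^ 2 ∂Pr ≤
      (1 / (n : ℝ)) ^ 2 * ((1 + 2 * c * ρ / (1 - ρ)) * ∑ i ∈ Finset.range n, A * b i) := by
  have hY : ∀ i, MemLp (fun ω => φ (Xc i ω)) 2 Pr := fun i =>
    memLp_two_comp_of_sq_le (hXm i) hφ (hV i) hsq
  have hcov : ∀ i j {C : ℝ}, i ≤ j → 0 ≤ C →
      (∀ x, |φ x * ∫ y, φ y ∂(P ^ (j - i)) x| ≤ C * V x) →
      ∫ ω, φ (Xc i ω) * φ (Xc j ω) ∂Pr ≤ C * b i := fun i j C hij hC0 hC =>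
    (integral_mul_le_of_map_prodMk_eq_compProd (hXm i) (hXm j) (hjoint i j hij) hφ
      ((hY i).integrable_mul (hY j)) (hV i) hC).trans (mul_le_mul_of_nonneg_left (hb i) hC0)
  refine integral_sq_average_le hY n (fun i => mul_nonneg hA ((integral_nonneg hV0).trans (hb i)))
    hc hρ0 hρ1 (fun i => hcov i i le_rfl hA fun x => ?_)
    fun i j hij => (hcov i j hij.le (by positivity) (hdecay _)).trans_eq (by ring)
  rw [Nat.sub_self, Kernel.pow_zero_apply, integral_dirac' _ _ hφ.stronglyMeasurable,
    abs_mul_self, ← sq]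
  exact hsq x

end Covariance

/-- Corollary, MSE bound with burn-in: for a deterministic start at
x₀ and burn-in time t, MSE(Î_{t,n}) ≤
(Fc^{2/p}/n)(1 + 2M_rγ_r/(1-γ_r))(πV + M²γᵗV(x₀)/(n(1-γ))). -/
theorem mse_bound_burnin {X : Type*} [MeasurableSpace X]
    (P : Kernel X X) [IsMarkovKernel P]
    (V : X → ℝ) (hVm : Measurable V) (hV1 : ∀ x, 1 ≤ V x)
    (π : Measure X) [IsProbabilityMeasure π]
    (hinv : π.bind (fun x => P x) = π) (hπV : Integrable V π)
    (M γ Mr γr : ℝ) (hM : 0 < M) (hγ0 : 0 < γ) (hγ1 : γ < 1)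
    (hMr : 0 < Mr) (hγr0 : 0 < γr) (hγr1 : γr < 1)
    (p r : ℝ) (hp : 2 ≤ p) (hr₁ : p / (p - 1) ≤ r) (hr₂ : r ≤ p)
    (hErgV : ∀ (x : X) (k : ℕ) (g : X → ℝ), Measurable g → (∀ y, |g y| ≤ V y) →
      |∫ y, g y ∂(evolve P (Measure.dirac x) k) - ∫ y, g y ∂π| ≤ M * γ ^ k * V x)
    (hErgVr : ∀ (x : X) (k : ℕ) (g : X → ℝ), Measurable g →
      (∀ y, |g y| ≤ (V y) ^ (1 / r)) →
      |∫ y, g y ∂(evolve P (Measure.dirac x) k) - ∫ y, g y ∂π| ≤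
        Mr * γr ^ k * (V x) ^ (1 / r))
    (f : X → ℝ) (hfm : Measurable f) (hfi : Integrable f π)
    (Fc : ℝ) (hFc : 0 ≤ Fc)
    (hfc : ∀ x, |f x - ∫ z, f z ∂π| ^ p ≤ Fc * V x)
    -- the Markov chain started deterministically at x₀
    (x₀ : X)
    {Ω : Type*} [MeasurableSpace Ω] (Pr : Measure Ω) [IsProbabilityMeasure Pr]
    (Xc : ℕ → Ω → X) (hXm : ∀ i, Measurable (Xc i))
    (hlaw : ∀ i, Measure.map (Xc i) Pr = evolve P (Measure.dirac x₀) i)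
    (hjoint : ∀ i j, i ≤ j → Measure.map (fun ω => (Xc i ω, Xc j ω)) Pr =
      (evolve P (Measure.dirac x₀) i).bind
        (fun x => (evolve P (Measure.dirac x) (j - i)).map (fun y => (x, y))))
    (t n : ℕ) (hn : 1 ≤ n) :
    ∫ ω, ((1 / (n : ℝ)) * ∑ i ∈ Finset.range n, f (Xc (t + i) ω) -
        ∫ z, f z ∂π) ^ 2 ∂Pr ≤
      (Fc ^ (2 / p) / n) * (1 + 2 * Mr * γr / (1 - γr)) *
        (∫ x, V x ∂π + M ^ 2 * γ ^ t * V x₀ / (n * (1 - γ))) := by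
  simp only [evolve_dirac] at hErgV hErgVr hlaw hjoint
  set fc : X → ℝ := fun y => f y - ∫ z, f z ∂π
  have hfcm : Measurable fc := hfm.sub measurable_const
  have hπfc : ∫ y, fc y ∂π = 0 := by simp [fc, integral_sub hfi (integrable_const _)]
  have hV0 : ∀ y, 0 ≤ V y := fun y => zero_le_one.trans (hV1 y)
  have hVt := integrable_and_integral_pow_add_apply_le hinv hVm hV0 hπV hM.le hγ0.le hErgV x₀ t
  simp_rw [one_div_mul_sum_range_sub (n := n) (by omega)]
  calc _ ≤ (1 / (n : ℝ)) ^ 2 * ((1 + 2 * Mr * γr / (1 - γr)) * ∑ i ∈ Finset.range n,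
        Fc ^ (2 / p) * (∫ y, V y ∂π + M ^ 2 * γ ^ (t + i) * V x₀)) :=
        integral_sq_average_le_of_markov (Xc := fun i => Xc (t + i)) (fun i => hXm _)
          (fun i j hij => by
            rw [hjoint _ _ (by omega), hlaw, Measure.bind_map_prodMk_eq_compProd,
              show t + j - (t + i) = j - i by omega])
          hfcm hV0 (fun i => by rw [hlaw]; exact (hVt i).1) (by positivity) hMr.le hγr0.le hγr1
          (fun x => sq_le_of_abs_rpow_le hp hFc (hV1 x) (hfc x))
          (abs_mul_integral_pow_le hMr.le hγr0.le hp hr₁ hr₂ hErgVr hFc hV1 hfcm hfc hπfc) n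
          (fun i => by rw [hlaw]; exact (hVt i).2)
    _ ≤ (1 / (n : ℝ)) ^ 2 * ((1 + 2 * Mr * γr / (1 - γr)) *
        (Fc ^ (2 / p) * (n * ∫ y, V y ∂π + M ^ 2 * γ ^ t * V x₀ / (1 - γ)))) := by
        gcongr
        exact sum_range_mul_add_pow_le (by positivity) (mul_nonneg (sq_nonneg M) (hV0 x₀))
          hγ0.le hγ1 t n
    _ = _ := by field_simp
end

section
/- (Median trick) Let m be an odd positive integer and Î₁, …, Î_m independent real random variables satisfying P(|Î_k − I| ≤ ε) ≥ 1 − a for each k, where a < 1/2. Let Î := median{Î₁, …, Î_m}. Then P(|Î − I| ≤ ε) ≥ 1 − α whenever m ≥ 2 ln(2α) / ln(4a(1−a)). -/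
/-!
Write `m = 2n + 1`. If the median of `Î₁, …, Î_m` lies outside `[I - ε, I + ε]`, then at least
`n + 1` of the independent bad events `|Î_k - I| > ε` occur, since `n + 1` estimates inside the
interval would pin the median there. The number of bad events is dominated by a binomial `(m, a)`
variable, whose tail beyond `n + 1` is at most `4ⁿ aⁿ⁺¹ (1 - a)ⁿ = a (4a(1 - a))ⁿ`: there are `4ⁿ`
outcomes with at least `n + 1` successes, each of probability at most `aⁿ⁺¹ (1 - a)ⁿ` as `a ≤ 1/2`.
The bound on `m` says `(4a(1 - a))^(m/2) ≤ 2α`, and `a ≤ √(a(1 - a))` turns this into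
`a (4a(1 - a))ⁿ ≤ α`.
-/

open MeasureTheory ProbabilityTheory

/-- The median of m real numbers: the ((m+1)/2)-th order statistic,
i.e. the entry at index (m-1)/2 of the sorted list. -/
noncomputable def medianFin (m : ℕ) (v : Fin m → ℝ) : ℝ :=
  ((Multiset.map v (Finset.univ : Finset (Fin m)).val).sort (· ≤ ·)).getD
    ((m - 1) / 2) 0

open Finset

namespace List

variable {α : Type*} [LinearOrder α] {l : List α}

lemma Pairwise.getElem_le_of_mem_drop (hl : l.Pairwise (· ≤ ·)) {j : ℕ} (hj : j < l.length)
    {x : α} (hx : x ∈ l.drop j) : l[j] ≤ x := by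
  have hsorted := hl.drop (i := j)
  rw [drop_eq_getElem_cons hj] at hx hsorted
  obtain rfl | hx := mem_cons.1 hx
  · exact le_rfl
  · exact rel_of_pairwise_cons hsorted hx

lemma Pairwise.le_getElem_of_mem_take (hl : l.Pairwise (· ≤ ·)) {j : ℕ} (hj : j < l.length)
    {x : α} (hx : x ∈ l.take (j + 1)) : x ≤ l[j] := by
  have hsorted := hl.take (i := j + 1)
  rw [take_succ_eq_append_getElem hj] at hx hsorted
  obtain hx | hx := mem_append.1 hx
  · exact (pairwise_append.1 hsorted).2.2 x hx _ (mem_singleton_self _)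
  · rw [mem_singleton.1 hx]

lemma Pairwise.countP_le_le_of_lt_getElem (hl : l.Pairwise (· ≤ ·)) {j : ℕ}
    (hj : j < l.length) {d : α} (hd : d < l[j]) : l.countP (· ≤ d) ≤ j := by
  have hdrop : (l.drop j).countP (· ≤ d) = 0 := by
    refine countP_eq_zero.2 fun x hx => ?_
    simpa using hd.trans_le (hl.getElem_le_of_mem_drop hj hx)
  rw [← take_append_drop j l, countP_append, hdrop]
  simpa using (countP_le_length (l := l.take j)).trans (length_take_le _ _)

lemma Pairwise.countP_le_le_of_getElem_lt (hl : l.Pairwise (· ≤ ·)) {j : ℕ}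
    (hj : j < l.length) {c : α} (hc : l[j] < c) : l.countP (c ≤ ·) ≤ l.length - (j + 1) := by
  have htake : (l.take (j + 1)).countP (c ≤ ·) = 0 := by
    refine countP_eq_zero.2 fun x hx => ?_
    simpa using (hl.le_getElem_of_mem_take hj hx).trans_lt hc
  rw [← take_append_drop (j + 1) l, countP_append, htake]
  simpa using countP_le_length (l := l.drop (j + 1))

end List

lemma medianFin_mem_Icc {m : ℕ} {v : Fin m → ℝ} {c d : ℝ}
    (h : m < 2 * #{k | v k ∈ Set.Icc c d}) : medianFin m v ∈ Set.Icc c d := by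
  set l := (Multiset.map v (univ : Finset (Fin m)).val).sort (· ≤ ·)
  have hl : l.Pairwise (· ≤ ·) := Multiset.pairwise_sort _ _
  have hlen : l.length = m := by simp [l]
  have hcount (p : ℝ → Prop) [DecidablePred p] : l.countP p = #{k | p (v k)} := by
    rw [← Multiset.coe_countP, Multiset.sort_eq, Multiset.countP_map]
    rfl
  have hinside : #{k | v k ∈ Set.Icc c d} ≤ min (l.countP (c ≤ ·)) (l.countP (· ≤ d)) := by
    rw [le_min_iff, hcount, hcount]
    constructor <;> refine card_le_card fun k => ?_ <;> simp +contextual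
  have hj : (m - 1) / 2 < l.length := by
    have : #{k | v k ∈ Set.Icc c d} ≤ m := (card_filter_le _ _).trans_eq (card_fin m)
    omega
  rw [medianFin, List.getD_eq_getElem _ _ hj]
  constructor
  · by_contra! hc
    have := hl.countP_le_le_of_getElem_lt hj hc
    omega
  · by_contra! hd
    have := hl.countP_le_le_of_lt_getElem hj hd
    omega

lemma abs_medianFin_sub_le {m : ℕ} {v : Fin m → ℝ} {x r : ℝ}
    (h : 2 * #{k | r < |v k - x|} < m) : |medianFin m v - x| ≤ r := by
  have hsplit := card_filter_add_card_filter_not (s := univ) fun k => r < |v k - x|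
  have hgood : #{k | ¬r < |v k - x|} = #{k | v k ∈ Set.Icc (x - r) (x + r)} := by
    simp only [not_lt, ← Set.mem_Icc_iff_abs_le, abs_sub_comm]
  rw [hgood, card_univ, Fintype.card_fin] at hsplit
  rw [abs_sub_comm, Set.mem_Icc_iff_abs_le]
  exact medianFin_mem_Icc (by omega)

lemma one_sub_measureReal_le_measureReal_compl {Ω : Type*} [MeasurableSpace Ω] {μ : Measure Ω}
    [IsProbabilityMeasure μ] (s : Set Ω) : 1 - μ.real s ≤ μ.real sᶜ := by
  have := measureReal_union_le (μ := μ) s sᶜ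
  rw [Set.union_compl_self, probReal_univ] at this
  linarith

/-- `binomTail a n j` is the probability that a binomial `(n, a)` variable is at least `j`,
computed by conditioning on the first trial. -/
noncomputable def binomTail (a : ℝ) : ℕ → ℕ → ℝ
  | _, 0 => 1
  | 0, _ + 1 => 0
  | n + 1, j + 1 => a * binomTail a n j + (1 - a) * binomTail a n (j + 1)

@[simp] lemma binomTail_zero_right (a : ℝ) (n : ℕ) : binomTail a n 0 = 1 := by
  cases n <;> rfl

lemma sum_range_succ_choose_succ (n j : ℕ) :
    ∑ i ∈ range (j + 1), (n + 1).choose i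
      = ∑ i ∈ range j, n.choose i + ∑ i ∈ range (j + 1), n.choose i := by
  simp only [sum_range_succ' _ j, Nat.choose_succ_succ, sum_add_distrib, Nat.choose_zero_right]
  ring

-- `2 ^ n - ∑ i < j, C(n, i)` counts the outcomes with at least `j` successes; the factor
-- `(1 - a) ^ j` is kept on the left so that no truncated exponent `n - j` appears.
lemma binomTail_mul_pow_le {a : ℝ} (ha : 0 ≤ a) (ha' : a ≤ 1 / 2) (n j : ℕ) :
    binomTail a n j * (1 - a) ^ j
      ≤ (2 ^ n - ∑ i ∈ range j, (n.choose i : ℝ)) * a ^ j * (1 - a) ^ n := by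
  induction n generalizing j with
  | zero => cases j <;> simp [binomTail, sum_range_succ']
  | succ n ih =>
    cases j with
    | zero => simpa [← mul_pow] using one_le_pow₀ (by linarith : (1 : ℝ) ≤ 2 * (1 - a))
    | succ j =>
      have hpascal := congrArg (Nat.cast (R := ℝ)) (sum_range_succ_choose_succ n j)
      push_cast at hpascal
      have h1 := mul_le_mul_of_nonneg_left (ih j) (mul_nonneg ha (by linarith : (0 : ℝ) ≤ 1 - a))
      have h2 := mul_le_mul_of_nonneg_left (ih (j + 1)) (by linarith : (0 : ℝ) ≤ 1 - a)
      rw [binomTail, hpascal]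
      linear_combination h1 + h2

lemma binomTail_le_mul_pow {a : ℝ} (ha : 0 ≤ a) (ha' : a ≤ 1 / 2) (n : ℕ) :
    binomTail a (2 * n + 1) (n + 1) ≤ a * (4 * a * (1 - a)) ^ n := by
  have h := binomTail_mul_pow_le ha ha' (2 * n + 1) (n + 1)
  have hhalf := congrArg (Nat.cast (R := ℝ)) (Nat.sum_range_choose_halfway n)
  push_cast at hhalf
  have h4 : (4 : ℝ) ^ n = 2 ^ (2 * n) := by rw [pow_mul]; norm_num
  rw [hhalf, h4] at h
  have hpos : 0 < (1 - a) ^ (n + 1) := pow_pos (by linarith) _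
  refine le_of_mul_le_mul_right (h.trans_eq ?_) hpos
  rw [mul_pow, mul_pow, h4]
  ring

lemma ProbabilityTheory.iIndepFun.iIndepSet_preimage {ι Ω β : Type*} [MeasurableSpace Ω]
    [MeasurableSpace β] {μ : Measure Ω} {X : ι → Ω → β} (hX : iIndepFun X μ) {S : ι → Set β}
    (hS : ∀ i, MeasurableSet (S i)) : iIndepSet (fun i => X i ⁻¹' S i) μ := by
  rw [iIndepSet_iff_iIndep]
  refine iIndep_of_iIndep_of_le ((iIndepFun_iff_iIndep _ _ _).1 hX) fun i => ?_
  exact MeasurableSpace.generateFrom_le fun t ht =>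
    (Set.mem_singleton_iff.1 ht) ▸ ⟨S i, hS i, rfl⟩

section CountingEvents

open Classical

variable {ι Ω : Type*} [MeasurableSpace Ω] {μ : Measure Ω} {B : ι → Set Ω}

-- Condition on `B k`, which is independent of the count over `s`.
lemma measureReal_le_card_filter_insert (hB : ∀ i, MeasurableSet (B i))
    (hindep : iIndepSet B μ) {k : ι} {s : Finset ι} (hks : k ∉ s) (j : ℕ) :
    μ.real {ω | j + 1 ≤ #{i ∈ insert k s | ω ∈ B i}}
      ≤ μ.real (B k) * μ.real {ω | j ≤ #{i ∈ s | ω ∈ B i}}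
        + (1 - μ.real (B k)) * μ.real {ω | j + 1 ≤ #{i ∈ s | ω ∈ B i}} := by
  have := hindep.isProbabilityMeasure
  set E : ℕ → Set Ω := fun j => {ω | j ≤ #{i ∈ s | ω ∈ B i}}
  set Y : ι → Ω → ℕ := fun i => (B i).indicator 1
  have hindepY : IndepFun (∑ i ∈ s, Y i) (Y k) μ :=
    hindep.iIndepFun_indicator.indepFun_finsetSum_of_notMem
      (fun i => measurable_one.indicator (hB i)) hks
  have hmul (j : ℕ) (u : Set ℕ) :
      μ.real (E j ∩ Y k ⁻¹' u) = μ.real (Y k ⁻¹' u) * μ.real (E j) := by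
    have hE : (∑ i ∈ s, Y i) ⁻¹' Set.Ici j = E j := by
      ext ω; simp [E, Y, Set.indicator_apply]
    rw [← hE, measureReal_def, hindepY.measure_inter_preimage_eq_mul _ _ measurableSet_Ici
      (DiscreteMeasurableSpace.forall_measurableSet u), ENNReal.toReal_mul, mul_comm]
    rfl
  have hBk : B k = Y k ⁻¹' {1} := by
    ext ω; by_cases hω : ω ∈ B k <;> simp [Y, hω]
  have hsplit : {ω | j + 1 ≤ #{i ∈ insert k s | ω ∈ B i}}
      ⊆ (E j ∩ B k) ∪ (E (j + 1) ∩ (B k)ᶜ) := by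
    intro ω hω
    by_cases hω' : ω ∈ B k
    · left
      simp_all [E, filter_insert, card_insert_of_notMem]
    · right
      simp_all [E, filter_insert]
  calc μ.real {ω | j + 1 ≤ #{i ∈ insert k s | ω ∈ B i}}
      ≤ μ.real (E j ∩ B k) + μ.real (E (j + 1) ∩ (B k)ᶜ) :=
        (measureReal_mono hsplit).trans (measureReal_union_le _ _)
    _ = μ.real (B k) * μ.real (E j) + (1 - μ.real (B k)) * μ.real (E (j + 1)) := by
        rw [← probReal_compl_eq_one_sub (hB k), hBk, ← Set.preimage_compl, hmul, hmul]

lemma measureReal_le_card_filter_le_binomTail (hB : ∀ i, MeasurableSet (B i))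
    (hindep : iIndepSet B μ) {a : ℝ} (ha : 0 ≤ a) (ha1 : a ≤ 1) (hBa : ∀ i, μ.real (B i) ≤ a)
    (s : Finset ι) (j : ℕ) : μ.real {ω | j ≤ #{i ∈ s | ω ∈ B i}} ≤ binomTail a #s j := by
  have := hindep.isProbabilityMeasure
  induction s using Finset.induction generalizing j with
  | empty => cases j <;> simp [binomTail]
  | @insert k s hks ih =>
    cases j with
    | zero => simp
    | succ j =>
      have hmono :
          μ.real {ω | j + 1 ≤ #{i ∈ s | ω ∈ B i}} ≤ μ.real {ω | j ≤ #{i ∈ s | ω ∈ B i}} :=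
        measureReal_mono fun ω (hω : j + 1 ≤ _) => show j ≤ _ by omega
      calc μ.real {ω | j + 1 ≤ #{i ∈ insert k s | ω ∈ B i}}
          ≤ μ.real (B k) * μ.real {ω | j ≤ #{i ∈ s | ω ∈ B i}}
            + (1 - μ.real (B k)) * μ.real {ω | j + 1 ≤ #{i ∈ s | ω ∈ B i}} :=
            measureReal_le_card_filter_insert hB hindep hks j
        _ ≤ a * μ.real {ω | j ≤ #{i ∈ s | ω ∈ B i}}
            + (1 - a) * μ.real {ω | j + 1 ≤ #{i ∈ s | ω ∈ B i}} := by
            nlinarith [hBa k]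
        _ ≤ a * binomTail a #s j + (1 - a) * binomTail a #s (j + 1) :=
            add_le_add (mul_le_mul_of_nonneg_left (ih j) ha)
              (mul_le_mul_of_nonneg_left (ih (j + 1)) (by linarith))
        _ = binomTail a #(insert k s) (j + 1) := by
            rw [card_insert_of_notMem hks, binomTail]

end CountingEvents

lemma pow_le_of_log_div_log_le {q b : ℝ} (hq0 : 0 < q) (hq1 : q < 1) (hb : 0 < b) {m : ℕ}
    (h : Real.log b / Real.log q ≤ m) : q ^ m ≤ b := by
  rw [div_le_iff_of_neg (Real.log_neg hq0 hq1)] at h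
  rw [← Real.log_le_log_iff (pow_pos hq0 m) hb, Real.log_pow]
  exact h

lemma mul_pow_le_of_pow_le {a α : ℝ} (ha0 : 0 ≤ a) (ha : a ≤ 1 / 2) (hα : 0 ≤ α) {n : ℕ}
    (h : (4 * a * (1 - a)) ^ (2 * n + 1) ≤ (2 * α) ^ 2) : a * (4 * a * (1 - a)) ^ n ≤ α := by
  set q := 4 * a * (1 - a)
  have hq : 0 ≤ q := mul_nonneg (by positivity) (by linarith)
  have ha2 : 4 * a ^ 2 ≤ q := by nlinarith
  suffices h2 : 2 * (a * q ^ n) ≤ 2 * α by linarith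
  refine (pow_le_pow_iff_left₀ (by positivity) (by positivity) two_ne_zero).1 ?_
  calc (2 * (a * q ^ n)) ^ 2 = 4 * a ^ 2 * q ^ (2 * n) := by ring
    _ ≤ q * q ^ (2 * n) := by gcongr
    _ = q ^ (2 * n + 1) := by ring
    _ ≤ (2 * α) ^ 2 := h

theorem median_trick_general {Ω : Type*} [MeasurableSpace Ω]
    (Pr : Measure Ω) [IsProbabilityMeasure Pr]
    (m : ℕ) (hodd : Odd m)
    (Ihat : Fin m → Ω → ℝ) (hIm : ∀ k, Measurable (Ihat k))
    (hindep : iIndepFun Ihat Pr)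
    (I ε a α : ℝ) (ha0 : 0 < a) (ha : a < 1 / 2)
    (hα0 : 0 < α)
    (hk : ∀ k, 1 - a ≤ (Pr {ω | |Ihat k ω - I| ≤ ε}).toReal)
    (hmlarge : 2 * Real.log (2 * α) / Real.log (4 * a * (1 - a)) ≤ (m : ℝ)) :
    1 - α ≤ (Pr {ω | |medianFin m (fun k => Ihat k ω) - I| ≤ ε}).toReal := by
  classical
  obtain ⟨n, rfl⟩ := hodd
  set S : Set ℝ := {x | ε < |x - I|}
  have hS : MeasurableSet S := measurableSet_lt measurable_const (by fun_prop)
  have hbad (k) : Pr.real (Ihat k ⁻¹' S) ≤ a := by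
    have hgood : (Ihat k ⁻¹' S)ᶜ = {ω | |Ihat k ω - I| ≤ ε} := by ext; simp [S]
    have := probReal_compl_eq_one_sub (μ := Pr) (hIm k hS)
    rw [hgood, measureReal_def] at this
    linarith [hk k]
  set E := {ω | n + 1 ≤ #{k | ω ∈ Ihat k ⁻¹' S}}
  have hmedian : Eᶜ ⊆ {ω | |medianFin _ (fun k => Ihat k ω) - I| ≤ ε} := fun ω hω =>
    abs_medianFin_sub_le (by have : ¬n + 1 ≤ #{k | ε < |Ihat k ω - I|} := hω; omega)
  have htail : Pr.real E ≤ a * (4 * a * (1 - a)) ^ n := by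
    have h := measureReal_le_card_filter_le_binomTail (fun k => hIm k hS)
      (hindep.iIndepSet_preimage fun _ => hS) ha0.le (by linarith) hbad univ (n + 1)
    rw [card_univ, Fintype.card_fin] at h
    exact h.trans (binomTail_le_mul_pow ha0.le ha.le n)
  have hq : (4 * a * (1 - a)) ^ (2 * n + 1) ≤ (2 * α) ^ 2 := by
    refine pow_le_of_log_div_log_le (by nlinarith) (by nlinarith) (by positivity) ?_
    rwa [Real.log_pow, Nat.cast_ofNat]
  rw [← measureReal_def]
  calc 1 - α ≤ 1 - Pr.real E := by linarith [mul_pow_le_of_pow_le ha0.le ha.le hα0.le hq]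
    _ ≤ Pr.real Eᶜ := one_sub_measureReal_le_measureReal_compl E
    _ ≤ _ := measureReal_mono hmedian

/-- the median trick, Lemma 5 of the paper: if Î₁,…,Î_m are
independent, each within ε of I with probability at least 1 - a > 1/2, and
m ≥ 2 ln(2α)/ln(4a(1-a)) is odd, then the median Î of Î₁,…,Î_m satisfies
P(|Î - I| ≤ ε) ≥ 1 - α. -/
theorem median_trick {Ω : Type*} [MeasurableSpace Ω]
    (Pr : Measure Ω) [IsProbabilityMeasure Pr]
    (m : ℕ) (hodd : Odd m) (hm0 : 0 < m)
    (Ihat : Fin m → Ω → ℝ) (hIm : ∀ k, Measurable (Ihat k))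
    (hindep : iIndepFun Ihat Pr)
    (I ε a α : ℝ) (hε : 0 < ε) (ha0 : 0 < a) (ha : a < 1 / 2)
    (hα0 : 0 < α) (hα1 : α < 1)
    (hk : ∀ k, 1 - a ≤ (Pr {ω | |Ihat k ω - I| ≤ ε}).toReal)
    (hmlarge : 2 * Real.log (2 * α) / Real.log (4 * a * (1 - a)) ≤ (m : ℝ)) :
    1 - α ≤ (Pr {ω | |medianFin m (fun k => Ihat k ω) - I| ≤ ε}).toReal :=
  median_trick_general Pr m hodd Ihat hIm hindep I ε a α ha0 ha hα0 hk hmlarge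
end
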